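/- arXiv:math/0602005 — 2 statements merged into one kernel-verified Lean document; each statement's English description precedes it below -/
import Mathlib

section
/- Let the forward complete system ẋ = f(x) on X be strongly monotone in reversed time (for all ξ₁, ξ₂ ∈ X and all t > 0, φ_t(ξ₁) ≻ φ_t(ξ₂) implies ξ₁ ≫ ξ₂) and translation invariant along the unit vector v ∈ interior(K), with X closed and invariant under translations by v. Then every solution φ_t(ξ) that is bounded modulo v is such that π_v(φ_t(ξ)) converges as t → ∞ to a point p ∈ X ∩ v^⊥ with f(p) ∈ span{v}, and this equilibrium p is unique. -/
/-!
The oscillation `osc z = M(z/v) - m(z/v)` of `z` relative to the interior point `v` of `K`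
(`M(z/v)` the least `l` with `z ⪯ l v`, `m(z/v)` the largest `l` with `l v ⪯ z`) is invariant
under adding multiples of `v` and vanishes exactly on `ℝ v`. Strong monotonicity in reversed time
makes `osc (φ_t ξ₁ - φ_t ξ₂)` nondecreasing in `t`, and strictly increasing unless it vanishes.
For two time-one orbits bounded modulo `v`, pass to a limit pair `(p, q)` along a subsequence:
by continuity of the flow, `osc (φ_1 p - φ_1 q) = osc (p - q)`, so the oscillation vanishes at
the limit, hence from the start, i.e. the orbits differ by a multiple of `v`. Applied to `ξ` and
`φ_t ξ` this shows that `π_v (φ_t ξ)` is constant, hence an equilibrium of the projected system;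
applied to two projected equilibria, which drift along `v`, it gives uniqueness.
-/

open Filter Topology Set

/-- The orthogonal projection `π_v(x) = x - (vᵀx) v` onto `v^⊥`. -/
noncomputable def piProj {n : ℕ} (v x : EuclideanSpace ℝ (Fin n)) :
    EuclideanSpace ℝ (Fin n) :=
  x - (inner ℝ v x : ℝ) • v

open Metric
open scoped NNReal

section ConeGauge

variable {E : Type*} [NormedAddCommGroup E] [NormedSpace ℝ E] {K : ProperCone ℝ E} {v : E}

noncomputable def coneMax (K : ProperCone ℝ E) (v z : E) : ℝ := sInf {l : ℝ | l • v - z ∈ K}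

noncomputable def coneOsc (K : ProperCone ℝ E) (v z : E) : ℝ := coneMax K v z + coneMax K v (-z)

structure IsSalientInteriorPoint (K : ProperCone ℝ E) (v : E) : Prop where
  salient : ∀ x ∈ K, -x ∈ K → x = 0
  mem_interior : v ∈ interior (K : Set E)
  ne_zero : v ≠ 0

lemma exists_forall_mul_norm_smul_sub_mem (hv : v ∈ interior (K : Set E)) :
    ∃ C : ℝ≥0, ∀ z : E, (C * ‖z‖) • v - z ∈ K := by
  obtain ⟨ε, hε, hball⟩ := nhds_basis_closedBall.mem_iff.1 (mem_interior_iff_mem_nhds.1 hv)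
  refine ⟨ε⁻¹.toNNReal, fun z => ?_⟩
  rw [Real.coe_toNNReal _ (by positivity)]
  rcases eq_or_ne z 0 with rfl | hz
  · simp
  have hz' : 0 < ‖z‖ := norm_pos_iff.2 hz
  have hmem : v - (ε / ‖z‖) • z ∈ K := hball <| by
    rw [mem_closedBall, dist_eq_norm, sub_sub_cancel_left, norm_neg, norm_smul,
      Real.norm_of_nonneg (by positivity), div_mul_cancel₀ _ hz'.ne']
  convert K.smul_mem hmem (by positivity : 0 ≤ ε⁻¹ * ‖z‖) using 1
  rw [smul_sub, smul_smul, show ε⁻¹ * ‖z‖ * (ε / ‖z‖) = 1 by field_simp, one_smul]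

lemma coneOsc_smul_eq_add (z : E) :
    coneOsc K v z • v = (coneMax K v z • v - z) + (coneMax K v (-z) • v - -z) := by
  rw [coneOsc, add_smul]; abel

namespace IsSalientInteriorPoint

lemma nonneg_of_smul_mem (hKv : IsSalientInteriorPoint K v) {c : ℝ} (hc : c • v ∈ K) :
    0 ≤ c := by
  by_contra! hneg
  have hvK : v ∈ K := interior_subset hKv.mem_interior
  have := hKv.salient _ hc (by simpa [← neg_smul] using K.smul_mem hvK (neg_nonneg.2 hneg.le))
  exact hneg.ne (smul_eq_zero.1 this |>.resolve_right hKv.ne_zero)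

lemma bddBelow_coneMax (hKv : IsSalientInteriorPoint K v) (z : E) :
    BddBelow {l : ℝ | l • v - z ∈ K} := by
  obtain ⟨C, hC⟩ := exists_forall_mul_norm_smul_sub_mem hKv.mem_interior
  refine ⟨-(C * ‖z‖), fun l hl => ?_⟩
  have key : l • v - z + ((C * ‖-z‖) • v - -z) = (l + C * ‖z‖) • v := by
    rw [norm_neg, add_smul]; abel
  linarith [hKv.nonneg_of_smul_mem (key ▸ K.add_mem hl (hC (-z)))]

lemma coneMax_le (hKv : IsSalientInteriorPoint K v) {z : E} {l : ℝ} (hl : l • v - z ∈ K) :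
    coneMax K v z ≤ l :=
  csInf_le (hKv.bddBelow_coneMax z) hl

lemma coneMax_smul_sub_mem (hKv : IsSalientInteriorPoint K v) (z : E) :
    coneMax K v z • v - z ∈ K := by
  obtain ⟨C, hC⟩ := exists_forall_mul_norm_smul_sub_mem hKv.mem_interior
  have hclosed : IsClosed {l : ℝ | l • v - z ∈ K} := K.isClosed.preimage (by fun_prop)
  exact hclosed.csInf_mem ⟨_, hC z⟩ (hKv.bddBelow_coneMax z)

lemma coneMax_lt_of_mem_interior (hKv : IsSalientInteriorPoint K v) {z : E} {l : ℝ}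
    (hl : l • v - z ∈ interior (K : Set E)) : coneMax K v z < l := by
  have hnhds : ∀ᶠ c in 𝓝[>] (0 : ℝ), (l - c) • v - z ∈ interior (K : Set E) := by
    refine nhdsWithin_le_nhds ((Continuous.tendsto (by fun_prop) 0).eventually
      (isOpen_interior.mem_nhds ?_))
    simpa using hl
  obtain ⟨c, hc, hcpos⟩ := (hnhds.and self_mem_nhdsWithin).exists
  linarith [hKv.coneMax_le (interior_subset hc), show 0 < c from hcpos]

lemma coneMax_add_le (hKv : IsSalientInteriorPoint K v) (z w : E) :
    coneMax K v (z + w) ≤ coneMax K v z + coneMax K v w := by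
  apply hKv.coneMax_le
  have key : coneMax K v z • v - z + (coneMax K v w • v - w) =
      (coneMax K v z + coneMax K v w) • v - (z + w) := by
    rw [add_smul]; abel
  exact key ▸ K.add_mem (hKv.coneMax_smul_sub_mem z) (hKv.coneMax_smul_sub_mem w)

lemma coneMax_add_smul (hKv : IsSalientInteriorPoint K v) (z : E) (c : ℝ) :
    coneMax K v (z + c • v) = coneMax K v z + c := by
  apply le_antisymm
  · apply hKv.coneMax_le
    convert hKv.coneMax_smul_sub_mem z using 1
    rw [add_smul]; abel
  · rw [← le_sub_iff_add_le]
    apply hKv.coneMax_le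
    convert hKv.coneMax_smul_sub_mem (z + c • v) using 1
    rw [sub_smul]; abel

lemma exists_lipschitzWith_coneMax (hKv : IsSalientInteriorPoint K v) :
    ∃ C, LipschitzWith C (coneMax K v) := by
  obtain ⟨C, hC⟩ := exists_forall_mul_norm_smul_sub_mem hKv.mem_interior
  have hle : ∀ z w, coneMax K v z - coneMax K v w ≤ C * dist z w := fun z w => by
    have := hKv.coneMax_add_le w (z - w)
    rw [add_sub_cancel] at this
    rw [dist_eq_norm]
    linarith [hKv.coneMax_le (hC (z - w))]
  exact ⟨C, LipschitzWith.of_dist_le_mul fun z w =>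
    abs_sub_le_iff.2 ⟨hle z w, dist_comm z w ▸ hle w z⟩⟩

lemma continuous_coneOsc (hKv : IsSalientInteriorPoint K v) : Continuous (coneOsc K v) := by
  obtain ⟨C, hC⟩ := hKv.exists_lipschitzWith_coneMax
  exact hC.continuous.add (hC.continuous.comp continuous_neg)

lemma coneOsc_add_smul (hKv : IsSalientInteriorPoint K v) (z : E) (c : ℝ) :
    coneOsc K v (z + c • v) = coneOsc K v z := by
  rw [coneOsc, coneOsc, neg_add, ← neg_smul, hKv.coneMax_add_smul, hKv.coneMax_add_smul]
  ring

lemma coneOsc_nonneg (hKv : IsSalientInteriorPoint K v) (z : E) : 0 ≤ coneOsc K v z :=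
  hKv.nonneg_of_smul_mem <| (coneOsc_smul_eq_add z) ▸
    K.add_mem (hKv.coneMax_smul_sub_mem z) (hKv.coneMax_smul_sub_mem (-z))

lemma coneOsc_smul (hKv : IsSalientInteriorPoint K v) (c : ℝ) : coneOsc K v (c • v) = 0 := by
  have h0 : coneMax K v 0 = 0 := by
    refine le_antisymm (hKv.coneMax_le (by simp)) ?_
    simpa [coneOsc] using hKv.coneOsc_nonneg 0
  simpa [coneOsc, h0] using hKv.coneOsc_add_smul 0 c

lemma eq_smul_of_coneOsc_eq_zero (hKv : IsSalientInteriorPoint K v) {z : E}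
    (hz : coneOsc K v z = 0) : z = coneMax K v z • v := by
  have hsum := coneOsc_smul_eq_add (K := K) (v := v) z
  rw [hz, zero_smul, eq_comm, add_eq_zero_iff_eq_neg] at hsum
  have := hKv.salient _ (hKv.coneMax_smul_sub_mem z)
    (by rw [hsum, neg_neg]; exact hKv.coneMax_smul_sub_mem (-z))
  exact (sub_eq_zero.1 this).symm

end IsSalientInteriorPoint

end ConeGauge

section ReversedMonotone

variable {E : Type*} [NormedAddCommGroup E] [NormedSpace ℝ E] {K : ProperCone ℝ E} {v : E}
  {X : Set E} {Φ : E → E}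

def StronglyOrderReflectingOn (K : ProperCone ℝ E) (Φ : E → E) (X : Set E) : Prop :=
  ∀ x ∈ X, ∀ y ∈ X, Φ x - Φ y ∈ K → Φ x ≠ Φ y → x - y ∈ interior (K : Set E)

namespace IsSalientInteriorPoint

lemma coneMax_sub_le_coneMax_map_sub (hKv : IsSalientInteriorPoint K v)
    (hΦ : StronglyOrderReflectingOn K Φ X) (hXv : ∀ x ∈ X, ∀ c : ℝ, x + c • v ∈ X)
    (hΦv : ∀ x ∈ X, ∀ c : ℝ, Φ (x + c • v) = Φ x + c • v) {x y : E} (hx : x ∈ X) (hy : y ∈ X) :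
    coneMax K v (x - y) ≤ coneMax K v (Φ x - Φ y) := by
  -- for `μ > coneMax K v (Φ x - Φ y)` we have `Φ x ≺ Φ (y + μ • v)`, hence `x ≪ y + μ • v`
  refine le_of_forall_gt_imp_ge_of_dense fun μ hμ => hKv.coneMax_le (interior_subset ?_)
  set l := coneMax K v (Φ x - Φ y)
  have hdiff : Φ (y + μ • v) - Φ x = (l • v - (Φ x - Φ y)) + (μ - l) • v := by
    rw [hΦv y hy, sub_smul]; abel
  have hmem : Φ (y + μ • v) - Φ x ∈ K := hdiff ▸
    K.add_mem (hKv.coneMax_smul_sub_mem _) (K.smul_mem (interior_subset hKv.mem_interior)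
      (sub_nonneg.2 hμ.le))
  have hne : Φ (y + μ • v) ≠ Φ x := fun h => by
    rw [h, sub_self, eq_comm, ← eq_neg_iff_add_eq_zero, ← neg_smul] at hdiff
    linarith [hKv.nonneg_of_smul_mem (hdiff ▸ hKv.coneMax_smul_sub_mem (Φ x - Φ y))]
  convert hΦ _ (hXv y hy μ) x hx hmem hne using 1
  abel

lemma coneMax_sub_lt_coneMax_map_sub (hKv : IsSalientInteriorPoint K v)
    (hΦ : StronglyOrderReflectingOn K Φ X) (hXv : ∀ x ∈ X, ∀ c : ℝ, x + c • v ∈ X)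
    (hΦv : ∀ x ∈ X, ∀ c : ℝ, Φ (x + c • v) = Φ x + c • v) {x y : E} (hx : x ∈ X) (hy : y ∈ X)
    (hw : coneMax K v (Φ x - Φ y) • v - (Φ x - Φ y) ≠ 0) :
    coneMax K v (x - y) < coneMax K v (Φ x - Φ y) := by
  set l := coneMax K v (Φ x - Φ y)
  have hdiff : Φ (y + l • v) - Φ x = l • v - (Φ x - Φ y) := by
    rw [hΦv y hy]; abel
  have hint := hΦ _ (hXv y hy l) x hx (hdiff ▸ hKv.coneMax_smul_sub_mem _)
    (sub_ne_zero.1 (hdiff ▸ hw))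
  exact hKv.coneMax_lt_of_mem_interior (by convert hint using 1; abel)

lemma coneOsc_sub_le_coneOsc_map_sub (hKv : IsSalientInteriorPoint K v)
    (hΦ : StronglyOrderReflectingOn K Φ X) (hXv : ∀ x ∈ X, ∀ c : ℝ, x + c • v ∈ X)
    (hΦv : ∀ x ∈ X, ∀ c : ℝ, Φ (x + c • v) = Φ x + c • v) {x y : E} (hx : x ∈ X) (hy : y ∈ X) :
    coneOsc K v (x - y) ≤ coneOsc K v (Φ x - Φ y) := by
  rw [coneOsc, coneOsc, neg_sub, neg_sub]
  exact add_le_add (hKv.coneMax_sub_le_coneMax_map_sub hΦ hXv hΦv hx hy)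
    (hKv.coneMax_sub_le_coneMax_map_sub hΦ hXv hΦv hy hx)

lemma coneOsc_sub_lt_coneOsc_map_sub (hKv : IsSalientInteriorPoint K v)
    (hΦ : StronglyOrderReflectingOn K Φ X) (hXv : ∀ x ∈ X, ∀ c : ℝ, x + c • v ∈ X)
    (hΦv : ∀ x ∈ X, ∀ c : ℝ, Φ (x + c • v) = Φ x + c • v) {x y : E} (hx : x ∈ X) (hy : y ∈ X)
    (hosc : coneOsc K v (Φ x - Φ y) ≠ 0) :
    coneOsc K v (x - y) < coneOsc K v (Φ x - Φ y) := by
  have hw : coneMax K v (Φ x - Φ y) • v - (Φ x - Φ y) ≠ 0 := fun h => by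
    rw [sub_eq_zero] at h
    exact hosc (h ▸ hKv.coneOsc_smul _)
  rw [coneOsc, coneOsc, neg_sub, neg_sub]
  exact add_lt_add_of_lt_of_le (hKv.coneMax_sub_lt_coneMax_map_sub hΦ hXv hΦv hx hy hw)
    (hKv.coneMax_sub_le_coneMax_map_sub hΦ hXv hΦv hy hx)

lemma coneOsc_sub_eq_zero_of_coneOsc_map_sub_le
    (hKv : IsSalientInteriorPoint K v) (hΦ : StronglyOrderReflectingOn K Φ X)
    (hXv : ∀ x ∈ X, ∀ c : ℝ, x + c • v ∈ X)
    (hΦv : ∀ x ∈ X, ∀ c : ℝ, Φ (x + c • v) = Φ x + c • v) {p q : E} (hp : p ∈ X) (hq : q ∈ X)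
    (hle : coneOsc K v (Φ p - Φ q) ≤ coneOsc K v (p - q)) : coneOsc K v (p - q) = 0 := by
  have hzero : coneOsc K v (Φ p - Φ q) = 0 := by
    by_contra h
    exact (hKv.coneOsc_sub_lt_coneOsc_map_sub hΦ hXv hΦv hp hq h).not_ge hle
  exact le_antisymm (hzero ▸ hKv.coneOsc_sub_le_coneOsc_map_sub hΦ hXv hΦv hp hq)
    (hKv.coneOsc_nonneg _)

end IsSalientInteriorPoint

end ReversedMonotone

section Orbits

variable {E : Type*} [NormedAddCommGroup E] [NormedSpace ℝ E] [ProperSpace E]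
  {K : ProperCone ℝ E} {v : E} {X : Set E} {Φ : E → E}

theorem IsSalientInteriorPoint.exists_eq_add_smul_of_isBounded_orbits
    (hKv : IsSalientInteriorPoint K v) (hΦ : StronglyOrderReflectingOn K Φ X)
    (hXv : ∀ x ∈ X, ∀ c : ℝ, x + c • v ∈ X)
    (hΦv : ∀ x ∈ X, ∀ c : ℝ, Φ (x + c • v) = Φ x + c • v)
    (hX : IsClosed X) (hΦX : MapsTo Φ X X) (hΦc : ContinuousOn Φ X)
    {x y : E} (hx : x ∈ X) (hy : y ∈ X) {a b : ℕ → ℝ}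
    (hxb : Bornology.IsBounded (range fun k => Φ^[k] x + a k • v))
    (hyb : Bornology.IsBounded (range fun k => Φ^[k] y + b k • v)) :
    ∃ c : ℝ, x = y + c • v := by
  set s : ℕ → ℝ := fun k => coneOsc K v (Φ^[k] x - Φ^[k] y)
  set x' : ℕ → E := fun k => Φ^[k] x + a k • v
  set y' : ℕ → E := fun k => Φ^[k] y + b k • v
  have hxk (k : ℕ) : Φ^[k] x ∈ X := hΦX.iterate k hx
  have hyk (k : ℕ) : Φ^[k] y ∈ X := hΦX.iterate k hy
  have hs_mono : Monotone s := monotone_nat_of_le_succ fun k => by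
    simp only [s, Function.iterate_succ_apply']
    exact hKv.coneOsc_sub_le_coneOsc_map_sub hΦ hXv hΦv (hxk k) (hyk k)
  have hs_eq (k : ℕ) : coneOsc K v (x' k - y' k) = s k := by
    have : x' k - y' k = Φ^[k] x - Φ^[k] y + (a k - b k) • v := by
      simp only [x', y', sub_smul]; abel
    rw [this, hKv.coneOsc_add_smul]
  have hΦs_eq (k : ℕ) : coneOsc K v (Φ (x' k) - Φ (y' k)) = s (k + 1) := by
    rw [hΦv _ (hxk k), hΦv _ (hyk k), add_sub_add_comm, ← sub_smul, hKv.coneOsc_add_smul]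
    simp only [s, Function.iterate_succ_apply']
  obtain ⟨⟨p, q⟩, -, σ, hσ, hlim⟩ := tendsto_subseq_of_bounded (hxb.prod hyb)
    (x := fun k => (x' k, y' k)) fun k => ⟨mem_range_self k, mem_range_self k⟩
  have hp : Tendsto (x' ∘ σ) atTop (𝓝 p) := hlim.fst_nhds
  have hq : Tendsto (y' ∘ σ) atTop (𝓝 q) := hlim.snd_nhds
  have hx'X : ∀ k, x' k ∈ X := fun k => hXv _ (hxk k) _
  have hy'X : ∀ k, y' k ∈ X := fun k => hXv _ (hyk k) _
  have hpX : p ∈ X := hX.mem_of_tendsto hp (Eventually.of_forall fun j => hx'X _)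
  have hqX : q ∈ X := hX.mem_of_tendsto hq (Eventually.of_forall fun j => hy'X _)
  have hs_lim : Tendsto (s ∘ σ) atTop (𝓝 (coneOsc K v (p - q))) := by
    simpa only [Function.comp_def, hs_eq] using
      (hKv.continuous_coneOsc.tendsto _).comp (hp.sub hq)
  have hs_le (k : ℕ) : s k ≤ coneOsc K v (p - q) :=
    ge_of_tendsto hs_lim ((hσ.tendsto_atTop.eventually_ge_atTop k).mono fun j hj => hs_mono hj)
  have hΦlim : Tendsto (fun j => coneOsc K v (Φ (x' (σ j)) - Φ (y' (σ j)))) atTop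
      (𝓝 (coneOsc K v (Φ p - Φ q))) := by
    have hΦp := (hΦc p hpX).tendsto.comp
      (tendsto_nhdsWithin_iff.2 ⟨hp, Eventually.of_forall fun j => hx'X _⟩)
    have hΦq := (hΦc q hqX).tendsto.comp
      (tendsto_nhdsWithin_iff.2 ⟨hq, Eventually.of_forall fun j => hy'X _⟩)
    exact (hKv.continuous_coneOsc.tendsto _).comp (hΦp.sub hΦq)
  have hlimit_zero := hKv.coneOsc_sub_eq_zero_of_coneOsc_map_sub_le hΦ hXv hΦv hpX hqX
    (le_of_tendsto' hΦlim fun j => (hΦs_eq _).trans_le (hs_le _))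
  have hs0 : s 0 = 0 := le_antisymm (hlimit_zero ▸ hs_le 0) (hKv.coneOsc_nonneg _)
  exact ⟨_, eq_add_of_sub_eq' (hKv.eq_smul_of_coneOsc_eq_zero hs0)⟩

end Orbits

theorem LocallyLipschitzOn.exists_lipschitzOnWith_closedBall_inter {α β : Type*}
    [PseudoMetricSpace α] [PseudoEMetricSpace β] {s Γ : Set α} {f : α → β}
    (hf : LocallyLipschitzOn s f) (hΓ : IsCompact Γ) (hΓs : Γ ⊆ s) :
    ∃ r > 0, ∃ L, ∀ z ∈ Γ, LipschitzOnWith L f (closedBall z r ∩ s) := by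
  have hloc (z : Γ) : ∃ L, ∃ ρ > 0, LipschitzOnWith L f (ball (z : α) ρ ∩ s) := by
    obtain ⟨L, t, ht, hLt⟩ := hf (hΓs z.2)
    obtain ⟨ρ, hρ, hρt⟩ := mem_nhdsWithin_iff.1 ht
    exact ⟨L, ρ, hρ, hLt.mono hρt⟩
  choose L ρ hρ hL using hloc
  obtain ⟨t, ht⟩ := hΓ.elim_finite_subcover (fun z : Γ => ball (z : α) (ρ z))
    (fun _ => isOpen_ball) fun z hz => mem_iUnion.2 ⟨⟨z, hz⟩, mem_ball_self (hρ _)⟩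
  obtain ⟨δ, hδ, hδΓ⟩ := lebesgue_number_lemma_of_metric hΓ
    (c := fun i : t => ball ((i : Γ) : α) (ρ i)) (fun _ => isOpen_ball) fun z hz => by
      obtain ⟨i, hi, hzi⟩ := mem_iUnion₂.1 (ht hz)
      exact mem_iUnion.2 ⟨⟨i, hi⟩, hzi⟩
  refine ⟨δ / 2, half_pos hδ, t.sup L, fun z hz => ?_⟩
  obtain ⟨i, hi⟩ := hδΓ z hz
  exact ((hL i).mono (inter_subset_inter_left _
    ((closedBall_subset_ball (half_lt_self hδ)).trans hi))).weaken (Finset.le_sup i.2)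

section ODE

variable {E : Type*} [NormedAddCommGroup E] [NormedSpace ℝ E] {X : Set E} {f : E → E}
  {u w : ℝ → E}

def IsForwardSolution (f : E → E) (X : Set E) (u : ℝ → E) : Prop :=
  ∀ t, 0 ≤ t → u t ∈ X ∧ HasDerivWithinAt u (f (u t)) (Ici 0) t

namespace IsForwardSolution

lemma continuousOn (hu : IsForwardSolution f X u) : ContinuousOn u (Ici 0) :=
  fun t ht => (hu t ht).2.continuousWithinAt

lemma dist_le_mul_exp_of_forall_dist_le {r : ℝ} {L : ℝ≥0} {b : ℝ} (hu : IsForwardSolution f X u)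
    (hw : IsForwardSolution f X w) (hb : 0 ≤ b)
    (hL : ∀ t ∈ Ico 0 b, LipschitzOnWith L f (closedBall (u t) r ∩ X))
    (hwu : ∀ t ∈ Ico 0 b, dist (w t) (u t) ≤ r) :
    dist (w b) (u b) ≤ dist (w 0) (u 0) * Real.exp (L * b) := by
  have hderiv {z : ℝ → E} (hz : IsForwardSolution f X z) (t : ℝ) (ht : t ∈ Ico 0 b) :
      HasDerivWithinAt z (f (z t)) (Ici t) t :=
    (hz t ht.1).2.mono (Ici_subset_Ici.2 ht.1)
  simpa using dist_le_of_trajectories_ODE_of_mem (v := fun _ => f) hL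
    (hw.continuousOn.mono Icc_subset_Ici_self) (hderiv hw)
    (fun t ht => ⟨mem_closedBall.2 (hwu t ht), (hw t ht.1).1⟩)
    (hu.continuousOn.mono Icc_subset_Ici_self) (hderiv hu)
    (fun t ht => ⟨mem_closedBall_self (dist_nonneg.trans (hwu t ht)), (hu t ht.1).1⟩)
    le_rfl b ⟨hb, le_rfl⟩

theorem exists_forall_dist_lt (hf : LocallyLipschitzOn X f) (hu : IsForwardSolution f X u)
    {τ ε : ℝ} (hτ : 0 ≤ τ) (hε : 0 < ε) :
    ∃ δ > 0, ∀ w, IsForwardSolution f X w → dist (w 0) (u 0) < δ → dist (w τ) (u τ) < ε := by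
  have hΓ : IsCompact (u '' Icc 0 τ) :=
    isCompact_Icc.image_of_continuousOn (hu.continuousOn.mono Icc_subset_Ici_self)
  obtain ⟨r, hr, L, hL⟩ := hf.exists_lipschitzOnWith_closedBall_inter hΓ
    (image_subset_iff.2 fun t ht => (hu t ht.1).1)
  set δ := min r ε / 2 * Real.exp (-(L * τ))
  have hδ (t : ℝ) (ht : t ∈ Icc 0 τ) : δ * Real.exp (L * t) ≤ min r ε / 2 := by
    rw [mul_assoc, ← Real.exp_add]
    exact mul_le_of_le_one_right (by positivity) (Real.exp_le_one_iff.2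
      (by nlinarith [ht.2, L.coe_nonneg]))
  refine ⟨δ, by positivity, fun w hw h0 => ?_⟩
  have hgron (b : ℝ) (hb : b ∈ Icc 0 τ) (hstay : ∀ t ∈ Ico 0 b, dist (w t) (u t) ≤ r) :
      dist (w b) (u b) ≤ min r ε / 2 := by
    refine (hu.dist_le_mul_exp_of_forall_dist_le hw hb.1 (fun t ht => hL _ ⟨t, ⟨ht.1, ?_⟩, rfl⟩)
      hstay).trans ((mul_le_mul_of_nonneg_right h0.le (Real.exp_pos _).le).trans (hδ b hb))
    exact ht.2.le.trans hb.2
  have hcont : ContinuousOn (fun t => dist (w t) (u t)) (Icc 0 τ) :=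
    (continuous_dist.comp_continuousOn (hw.continuousOn.prodMk hu.continuousOn)).mono
      Icc_subset_Ici_self
  have hstay (t : ℝ) (ht : t ∈ Icc 0 τ) : dist (w t) (u t) < r := by
    -- Gronwall up to the first exit time `t₁` from the `r`-tube around `u` keeps `w` inside
    by_contra! hexit
    have hS : IsCompact (Icc 0 τ ∩ (fun t => dist (w t) (u t)) ⁻¹' Ici r) :=
      isCompact_Icc.of_isClosed_subset
        (hcont.preimage_isClosed_of_isClosed isClosed_Icc isClosed_Ici) inter_subset_left
    obtain ⟨t₁, ⟨ht₁, hexit₁⟩, hfirst⟩ := hS.exists_isLeast ⟨t, ht, hexit⟩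
    have := hgron t₁ ht₁ fun s hs => le_of_not_ge fun h =>
      hs.2.not_ge (hfirst ⟨⟨hs.1, hs.2.le.trans ht₁.2⟩, h⟩)
    linarith [min_le_left r ε, show r ≤ dist (w t₁) (u t₁) from hexit₁]
  linarith [hgron τ ⟨hτ, le_rfl⟩ fun t ht => (hstay t ⟨ht.1, ht.2.le⟩).le, min_le_right r ε]

lemma eq_of_apply_zero_eq (hf : LocallyLipschitzOn X f)
    (hu : IsForwardSolution f X u) (hw : IsForwardSolution f X w) (h0 : w 0 = u 0) {t : ℝ}
    (ht : 0 ≤ t) : w t = u t :=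
  eq_of_forall_dist_le fun ε hε => by
    obtain ⟨δ, hδ, h⟩ := hu.exists_forall_dist_lt hf ht hε
    exact (h w hw (by rwa [h0, dist_self])).le

end IsForwardSolution

def IsForwardFlow (f : E → E) (X : Set E) (φ : ℝ → E → E) : Prop :=
  ∀ ξ ∈ X, φ 0 ξ = ξ ∧ IsForwardSolution f X (φ · ξ)

namespace IsForwardFlow

variable {φ : ℝ → E → E} {ξ : E} {s t : ℝ}

lemma mem (hφ : IsForwardFlow f X φ) (hξ : ξ ∈ X) (ht : 0 ≤ t) : φ t ξ ∈ X :=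
  ((hφ ξ hξ).2 t ht).1

lemma continuousOn (hφ : IsForwardFlow f X φ) (hf : LocallyLipschitzOn X f) (ht : 0 ≤ t) :
    ContinuousOn (φ t) X := by
  refine Metric.continuousOn_iff.2 fun ξ hξ ε hε => ?_
  obtain ⟨δ, hδ, h⟩ := (hφ ξ hξ).2.exists_forall_dist_lt hf ht hε
  exact ⟨δ, hδ, fun η hη hd => h _ (hφ η hη).2 (by rwa [(hφ η hη).1, (hφ ξ hξ).1])⟩

lemma apply_add (hφ : IsForwardFlow f X φ) (hf : LocallyLipschitzOn X f) (hξ : ξ ∈ X)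
    (hs : 0 ≤ s) (ht : 0 ≤ t) : φ (t + s) ξ = φ t (φ s ξ) := by
  have hshift : IsForwardSolution f X (fun t => φ (t + s) ξ) := fun t ht => by
    refine ⟨hφ.mem hξ (by linarith), ?_⟩
    have := ((hφ ξ hξ).2 (t + s) (by linarith)).2.scomp t
      ((hasDerivAt_id t).add_const s).hasDerivWithinAt
      fun r (hr : 0 ≤ r) => show 0 ≤ r + s by linarith
    rwa [one_smul] at this
  exact (hφ _ (hφ.mem hξ hs)).2.eq_of_apply_zero_eq hf hshift
    (by simp only [zero_add, (hφ _ (hφ.mem hξ hs)).1]) ht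

lemma iterate_one (hφ : IsForwardFlow f X φ) (hf : LocallyLipschitzOn X f) (hξ : ξ ∈ X)
    (k : ℕ) : (φ 1)^[k] ξ = φ k ξ := by
  induction k with
  | zero => simp [(hφ ξ hξ).1]
  | succ k ih =>
    rw [Function.iterate_succ_apply', ih, ← hφ.apply_add hf hξ k.cast_nonneg zero_le_one]
    push_cast; ring_nf

variable {v x p : E}

lemma map_add_smul (hφ : IsForwardFlow f X φ) (hXv : ∀ x ∈ X, ∀ c : ℝ, x + c • v ∈ X)
    (hφv : ∀ ξ ∈ X, ∀ c t : ℝ, 0 ≤ t → φ t (ξ + c • v) = φ t ξ + c • v) (hx : x ∈ X)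
    (c : ℝ) : f (x + c • v) = f x := by
  have h₁ := ((hφ _ (hXv x hx c)).2 0 le_rfl).2
  have h₂ := (((hφ x hx).2 0 le_rfl).2.add_const (c • v)).congr
    (fun t ht => hφv x hx c t ht) (hφv x hx c 0 le_rfl)
  simp only [(hφ _ (hXv x hx c)).1] at h₁
  simp only [(hφ x hx).1] at h₂
  exact (uniqueDiffOn_Ici 0 0 self_mem_Ici).eq_deriv _ h₁ h₂

lemma apply_eq_add_smul (hφ : IsForwardFlow f X φ) (hf : LocallyLipschitzOn X f)
    (hXv : ∀ x ∈ X, ∀ c : ℝ, x + c • v ∈ X)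
    (hφv : ∀ ξ ∈ X, ∀ c t : ℝ, 0 ≤ t → φ t (ξ + c • v) = φ t ξ + c • v) (hp : p ∈ X) {r : ℝ}
    (hfp : f p = r • v) (ht : 0 ≤ t) : φ t p = p + (t * r) • v := by
  have hline : IsForwardSolution f X (fun t => p + (t * r) • v) := fun t _ => by
    refine ⟨hXv p hp _, ?_⟩
    rw [hφ.map_add_smul hXv hφv hp, hfp]
    simpa using (((hasDerivAt_id t).mul_const r).smul_const v).const_add p |>.hasDerivWithinAt
  exact hline.eq_of_apply_zero_eq hf (hφ p hp).2 (by simp [(hφ p hp).1]) ht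

end IsForwardFlow

end ODE

def properConeOfConvex {E : Type*} [NormedAddCommGroup E] [NormedSpace ℝ E] (K : Set E)
    (hKclosed : IsClosed K) (hKconv : Convex ℝ K)
    (hKcone : ∀ c : ℝ, 0 ≤ c → ∀ x ∈ K, c • x ∈ K) (hK : K.Nonempty) : ProperCone ℝ E where
  carrier := K
  add_mem' {x y} hx hy := by
    convert hKcone 2 zero_le_two _ (hKconv hx hy one_half_pos.le one_half_pos.le (add_halves 1))
      using 1
    module
  zero_mem' := by simpa using hKcone 0 le_rfl _ hK.some_mem
  smul_mem' c x hx := hKcone c c.2 x hx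
  isClosed' := hKclosed

section Projection

variable {n : ℕ} {v : EuclideanSpace ℝ (Fin n)}

lemma piProj_add_smul (hv : ‖v‖ = 1) (x : EuclideanSpace ℝ (Fin n)) (c : ℝ) :
    piProj v (x + c • v) = piProj v x := by
  simp only [piProj, inner_add_right, real_inner_smul_right, real_inner_self_eq_norm_sq, hv]
  module

lemma inner_piProj (hv : ‖v‖ = 1) (x : EuclideanSpace ℝ (Fin n)) : inner ℝ v (piProj v x) = 0 := by
  simp [piProj, inner_sub_right, real_inner_smul_right, hv]

lemma piProj_eq_self {x : EuclideanSpace ℝ (Fin n)} (hx : inner ℝ v x = 0) :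
    piProj v x = x := by
  simp [piProj, hx]

lemma piProj_eq_add_smul (x : EuclideanSpace ℝ (Fin n)) :
    piProj v x = x + (-inner ℝ v x) • v := by
  rw [piProj, neg_smul, sub_eq_add_neg]

end Projection

lemma IsSalientInteriorPoint.piProj_eq_of_isBounded_piProj_flow {n : ℕ}
    {K : ProperCone ℝ (EuclideanSpace ℝ (Fin n))} {X : Set (EuclideanSpace ℝ (Fin n))}
    {f : EuclideanSpace ℝ (Fin n) → EuclideanSpace ℝ (Fin n)}
    {φ : ℝ → EuclideanSpace ℝ (Fin n) → EuclideanSpace ℝ (Fin n)} {v : EuclideanSpace ℝ (Fin n)}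
    (hKv : IsSalientInteriorPoint K v) (hv : ‖v‖ = 1) (hφ : IsForwardFlow f X φ)
    (hf : LocallyLipschitzOn X f) (hX : IsClosed X) (hXv : ∀ x ∈ X, ∀ c : ℝ, x + c • v ∈ X)
    (hφv : ∀ x ∈ X, ∀ c : ℝ, φ 1 (x + c • v) = φ 1 x + c • v)
    (hφK : StronglyOrderReflectingOn K (φ 1) X) {x y : EuclideanSpace ℝ (Fin n)} (hx : x ∈ X)
    (hy : y ∈ X) (hxb : ∃ M, ∀ t, 0 ≤ t → ‖piProj v (φ t x)‖ ≤ M)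
    (hyb : ∃ M, ∀ t, 0 ≤ t → ‖piProj v (φ t y)‖ ≤ M) :
    piProj v x = piProj v y := by
  have hbdd {z} (hz : z ∈ X) (hzb : ∃ M, ∀ t, 0 ≤ t → ‖piProj v (φ t z)‖ ≤ M) :
      Bornology.IsBounded (range fun k => (φ 1)^[k] z + (-inner ℝ v ((φ 1)^[k] z)) • v) := by
    obtain ⟨M, hM⟩ := hzb
    refine isBounded_iff_forall_norm_le.2 ⟨M, forall_mem_range.2 fun k => ?_⟩
    rw [← piProj_eq_add_smul, hφ.iterate_one hf hz]
    exact hM _ k.cast_nonneg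
  obtain ⟨c, rfl⟩ := hKv.exists_eq_add_smul_of_isBounded_orbits hφK hXv hφv hX
    (fun x hx => hφ.mem hx zero_le_one) (hφ.continuousOn hf zero_le_one) hx hy (hbdd hx hxb)
    (hbdd hy hyb)
  exact piProj_add_smul hv y c

lemma IsForwardFlow.apply_eq_inner_smul_of_piProj_eq {n : ℕ} {X : Set (EuclideanSpace ℝ (Fin n))}
    {f : EuclideanSpace ℝ (Fin n) → EuclideanSpace ℝ (Fin n)}
    {φ : ℝ → EuclideanSpace ℝ (Fin n) → EuclideanSpace ℝ (Fin n)} {v p : EuclideanSpace ℝ (Fin n)}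
    (hφ : IsForwardFlow f X φ) (hp : p ∈ X) (h : ∀ t, 0 ≤ t → piProj v (φ t p) = piProj v p) :
    f p = inner ℝ v (f p) • v := by
  have hd := ((hφ p hp).2 0 le_rfl).2
  simp only [(hφ p hp).1] at hd
  have hline : HasDerivWithinAt (fun t => piProj v p + inner ℝ v (φ t p) • v)
      (inner ℝ v (f p) • v) (Ici 0) 0 :=
    (((innerSL ℝ v).hasFDerivAt.comp_hasDerivWithinAt 0 hd).smul_const v).const_add _
  have hdecomp (t : ℝ) (ht : t ∈ Ici 0) : φ t p = piProj v p + inner ℝ v (φ t p) • v := by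
    rw [← h t ht, piProj, sub_add_cancel]
  exact (uniqueDiffOn_Ici 0 0 self_mem_Ici).eq_deriv _ hd
    (hline.congr hdecomp (hdecomp 0 self_mem_Ici))

theorem stmt1_general {n : ℕ} (K X : Set (EuclideanSpace ℝ (Fin n)))
    (f : EuclideanSpace ℝ (Fin n) → EuclideanSpace ℝ (Fin n))
    (φ : ℝ → EuclideanSpace ℝ (Fin n) → EuclideanSpace ℝ (Fin n))
    (v : EuclideanSpace ℝ (Fin n))
    -- K is a closed pointed convex cone with nonempty interior
    (hKclosed : IsClosed K) (hKconv : Convex ℝ K)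
    (hKcone : ∀ c : ℝ, 0 ≤ c → ∀ x ∈ K, c • x ∈ K)
    (hKpointed : ∀ x ∈ K, -x ∈ K → x = 0)
    (hv : v ∈ interior K) (hvnorm : ‖v‖ = 1)
    -- X is closed, the closure of its interior, and invariant under translations by v
    (hXclosed : IsClosed X)
    (hXtrans : ∀ x ∈ X, ∀ lam : ℝ, x + lam • v ∈ X)
    -- f is locally Lipschitz on X
    (hf : ∀ x ∈ X, ∃ L : NNReal, ∃ U ∈ nhdsWithin x X, LipschitzOnWith L f U)
    -- φ is the forward complete flow of ẋ = f(x) on X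
    (hφ0 : ∀ ξ ∈ X, φ 0 ξ = ξ)
    (hφX : ∀ ξ ∈ X, ∀ t : ℝ, 0 ≤ t → φ t ξ ∈ X)
    (hφode : ∀ ξ ∈ X, ∀ t : ℝ, 0 ≤ t →
      HasDerivWithinAt (fun s => φ s ξ) (f (φ t ξ)) (Set.Ici 0) t)
    -- strong monotonicity in reversed time:
    -- for t > 0, φ_t(ξ₁) ≻ φ_t(ξ₂) implies ξ₁ ≫ ξ₂
    (hmono : ∀ ξ₁ ∈ X, ∀ ξ₂ ∈ X, ∀ t : ℝ, 0 < t →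
      φ t ξ₁ - φ t ξ₂ ∈ K → φ t ξ₁ ≠ φ t ξ₂ → ξ₁ - ξ₂ ∈ interior K)
    -- translation invariance along v
    (htrans : ∀ ξ ∈ X, ∀ lam t : ℝ, 0 ≤ t → φ t (ξ + lam • v) = φ t ξ + lam • v) :
    -- every solution bounded modulo v has π_v(φ_t(ξ)) converging to an equilibrium
    (∀ ξ ∈ X, (∃ M : ℝ, ∀ t : ℝ, 0 ≤ t → ‖piProj v (φ t ξ)‖ ≤ M) →
      ∃ p : EuclideanSpace ℝ (Fin n), p ∈ X ∧ (inner ℝ v p : ℝ) = 0 ∧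
        (∃ r : ℝ, f p = r • v) ∧
        Tendsto (fun t => piProj v (φ t ξ)) atTop (𝓝 p)) ∧
    -- moreover, the equilibrium of the projected system is unique
    (∀ p₁ p₂ : EuclideanSpace ℝ (Fin n),
      p₁ ∈ X → (inner ℝ v p₁ : ℝ) = 0 → (∃ r : ℝ, f p₁ = r • v) →
      p₂ ∈ X → (inner ℝ v p₂ : ℝ) = 0 → (∃ r : ℝ, f p₂ = r • v) → p₁ = p₂) := by
  have hKv : IsSalientInteriorPoint (properConeOfConvex K hKclosed hKconv hKcone
      ⟨v, interior_subset hv⟩) v := ⟨hKpointed, hv, by rintro rfl; simp at hvnorm⟩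
  have hφ : IsForwardFlow f X φ := fun ξ hξ =>
    ⟨hφ0 ξ hξ, fun t ht => ⟨hφX ξ hξ t ht, hφode ξ hξ t ht⟩⟩
  have horbits {x y} (hx : x ∈ X) (hy : y ∈ X) :=
    hKv.piProj_eq_of_isBounded_piProj_flow hvnorm hφ hf hXclosed hXtrans
      (fun x hx c => htrans x hx c 1 zero_le_one) (fun x hx y hy => hmono x hx y hy 1 one_pos) hx hy
  refine ⟨fun ξ hξ ⟨M, hM⟩ => ?_, fun p₁ p₂ hp₁ hv₁ ⟨r₁, hr₁⟩ hp₂ hv₂ ⟨r₂, hr₂⟩ => ?_⟩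
  · have hconst (t : ℝ) (ht : 0 ≤ t) : piProj v (φ t ξ) = piProj v ξ :=
      horbits (hφ.mem hξ ht) hξ ⟨M, fun s hs => hφ.apply_add hf hξ ht hs ▸ hM _ (by positivity)⟩
        ⟨M, hM⟩
    have hpX : piProj v ξ ∈ X := piProj_eq_add_smul ξ ▸ hXtrans ξ hξ _
    refine ⟨piProj v ξ, hpX, inner_piProj hvnorm ξ,
      ⟨_, hφ.apply_eq_inner_smul_of_piProj_eq hpX fun t ht => ?_⟩,
      tendsto_const_nhds.congr' ((eventually_ge_atTop 0).mono fun t ht => (hconst t ht).symm)⟩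
    rw [piProj_eq_add_smul ξ, htrans ξ hξ _ t ht, piProj_add_smul hvnorm, piProj_add_smul hvnorm,
      hconst t ht]
  · have hequilibrium {p} (hp : p ∈ X) {r : ℝ} (hr : f p = r • v) :
        ∃ M, ∀ t, 0 ≤ t → ‖piProj v (φ t p)‖ ≤ M :=
      ⟨‖piProj v p‖, fun t ht => by
        rw [hφ.apply_eq_add_smul hf hXtrans htrans hp hr ht, piProj_add_smul hvnorm]⟩
    rw [← piProj_eq_self hv₁, ← piProj_eq_self hv₂]
    exact horbits hp₁ hp₂ (hequilibrium hp₁ hr₁) (hequilibrium hp₂ hr₂)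

/-- a forward complete system `ẋ = f(x)` on `X` which is strongly monotone
in reversed time and translation invariant along the unit vector `v ∈ interior K`, with
`X` closed and invariant under translations by `v`, is such that every solution bounded
modulo `v` has `π_v(φ_t(ξ))` converging to an equilibrium `p ∈ X ∩ v^⊥` of the projected
system (`f(p) ∈ span{v}`); moreover this equilibrium is unique. -/
theorem stmt1 {n : ℕ} (K X : Set (EuclideanSpace ℝ (Fin n)))
    (f : EuclideanSpace ℝ (Fin n) → EuclideanSpace ℝ (Fin n))
    (φ : ℝ → EuclideanSpace ℝ (Fin n) → EuclideanSpace ℝ (Fin n))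
    (v : EuclideanSpace ℝ (Fin n))
    -- K is a closed pointed convex cone with nonempty interior
    (hKclosed : IsClosed K) (hKconv : Convex ℝ K)
    (hKcone : ∀ c : ℝ, 0 ≤ c → ∀ x ∈ K, c • x ∈ K)
    (hKpointed : ∀ x ∈ K, -x ∈ K → x = 0)
    (hv : v ∈ interior K) (hvnorm : ‖v‖ = 1)
    -- X is closed, the closure of its interior, and invariant under translations by v
    (hXclosed : IsClosed X) (hXreg : X = closure (interior X))
    (hXtrans : ∀ x ∈ X, ∀ lam : ℝ, x + lam • v ∈ X)
    -- f is locally Lipschitz on X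
    (hf : ∀ x ∈ X, ∃ L : NNReal, ∃ U ∈ nhdsWithin x X, LipschitzOnWith L f U)
    -- φ is the forward complete flow of ẋ = f(x) on X
    (hφ0 : ∀ ξ ∈ X, φ 0 ξ = ξ)
    (hφX : ∀ ξ ∈ X, ∀ t : ℝ, 0 ≤ t → φ t ξ ∈ X)
    (hφode : ∀ ξ ∈ X, ∀ t : ℝ, 0 ≤ t →
      HasDerivWithinAt (fun s => φ s ξ) (f (φ t ξ)) (Set.Ici 0) t)
    -- strong monotonicity in reversed time:
    -- for t > 0, φ_t(ξ₁) ≻ φ_t(ξ₂) implies ξ₁ ≫ ξ₂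
    (hmono : ∀ ξ₁ ∈ X, ∀ ξ₂ ∈ X, ∀ t : ℝ, 0 < t →
      φ t ξ₁ - φ t ξ₂ ∈ K → φ t ξ₁ ≠ φ t ξ₂ → ξ₁ - ξ₂ ∈ interior K)
    -- translation invariance along v
    (htrans : ∀ ξ ∈ X, ∀ lam t : ℝ, 0 ≤ t → φ t (ξ + lam • v) = φ t ξ + lam • v) :
    -- every solution bounded modulo v has π_v(φ_t(ξ)) converging to an equilibrium
    (∀ ξ ∈ X, (∃ M : ℝ, ∀ t : ℝ, 0 ≤ t → ‖piProj v (φ t ξ)‖ ≤ M) →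
      ∃ p : EuclideanSpace ℝ (Fin n), p ∈ X ∧ (inner ℝ v p : ℝ) = 0 ∧
        (∃ r : ℝ, f p = r • v) ∧
        Tendsto (fun t => piProj v (φ t ξ)) atTop (𝓝 p)) ∧
    -- moreover, the equilibrium of the projected system is unique
    (∀ p₁ p₂ : EuclideanSpace ℝ (Fin n),
      p₁ ∈ X → (inner ℝ v p₁ : ℝ) = 0 → (∃ r : ℝ, f p₁ = r • v) →
      p₂ ∈ X → (inner ℝ v p₂ : ℝ) = 0 → (∃ r : ℝ, f p₂ = r • v) → p₁ = p₂) :=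
  stmt1_general K X f φ v hKclosed hKconv hKcone hKpointed hv hvnorm hXclosed hXtrans hf hφ0 hφX
    hφode hmono htrans
end

section
/- Let the strongly monotone, forward complete system ẋ = f(x) on X be translation invariant along the unit vector v ∈ interior(K), with X closed and invariant under translations by v, and let ξ ∈ X be such that the solution φ_t(ξ) is bounded modulo v. Then for every τ > 0, the distance from φ_{t+τ}(ξ) − φ_t(ξ) to the line span{v} tends to 0 as t → ∞; that is, inf_{λ ∈ ℝ} |φ_{t+τ}(ξ) − φ_t(ξ) − λv| → 0 as t → ∞. -/
/-!
Write `M(x)` for the least `c` with `x ⪯ c • v`. For a monotone semiflow commuting with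
translations along `v`, `t ↦ M(φ_t ξ₁ - φ_t ξ₂)` is nonincreasing, so with `ξ₁ = φ_τ ξ`, `ξ₂ = ξ`
both `M(φ_{t+τ} ξ - φ_t ξ)` and `M(φ_t ξ - φ_{t+τ} ξ)` converge, to `A` and `B`. The trajectory
modulo `v` accumulates at some `w`; since the flow is uniformly Lipschitz (a point `η` lies
between `w ± c • v` with `c ~ ‖η - w‖`, and the flow preserves this), the two coefficients are
constant, equal to `A` and `B`, along the trajectories of `φ_τ w` and `w`. Strong monotonicity makes the first one drop strictly unless `φ_τ w - w` is a
multiple of `v`, and then `A + B = 0`. Finally the distance from `x` to `span{v}` is at most a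
multiple of `M(x) + M(-x)`, because order intervals of a closed salient cone are bounded.
-/

open Filter Topology Set

variable {E : Type*} [NormedAddCommGroup E] [NormedSpace ℝ E]

theorem ODE_solution_unique_Ici {X : Set E} {f : E → E}
    (hf : ∀ x ∈ X, ∃ L : NNReal, ∃ U ∈ 𝓝[X] x, LipschitzOnWith L f U) {y z : ℝ → E}
    (hy : ∀ t, 0 ≤ t → HasDerivWithinAt y (f (y t)) (Ici 0) t) (hyX : ∀ t, 0 ≤ t → y t ∈ X)
    (hz : ∀ t, 0 ≤ t → HasDerivWithinAt z (f (z t)) (Ici 0) t) (hzX : ∀ t, 0 ≤ t → z t ∈ X)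
    (h0 : y 0 = z 0) : EqOn y z (Ici 0) := by
  have hyc : ContinuousOn y (Ici 0) := fun t ht => (hy t ht).continuousWithinAt
  have hzc : ContinuousOn z (Ici 0) := fun t ht => (hz t ht).continuousWithinAt
  intro T hT
  suffices Icc 0 T ⊆ {t | y t = z t} from this ⟨hT, le_rfl⟩
  refine IsClosed.Icc_subset_of_forall_mem_nhdsWithin ?_ h0 fun x ⟨hxyz, hx⟩ => ?_
  · have hset : {t | y t = z t} ∩ Icc 0 T = Icc 0 T ∩ (fun t => y t - z t) ⁻¹' {0} := by
      ext t
      simp [sub_eq_zero, and_comm]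
    rw [hset]
    exact ((hyc.mono Icc_subset_Ici_self).sub (hzc.mono Icc_subset_Ici_self))
      |>.preimage_isClosed_of_isClosed isClosed_Icc isClosed_singleton
  -- near `y x = z x` both solutions stay in a set where `f` is Lipschitz
  obtain ⟨L, U, hU, hLip⟩ := hf (y x) (hyX x hx.1)
  have htendsto {g : ℝ → E} (hgc : ContinuousOn g (Ici 0)) (hgX : ∀ t, 0 ≤ t → g t ∈ X) :
      Tendsto g (𝓝[≥] x) (𝓝[X] (g x)) :=
    ((hgc x hx.1).mono (Ici_subset_Ici.2 hx.1)).tendsto_nhdsWithin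
      fun t ht => hgX t (hx.1.trans ht)
  have hyU : ∀ᶠ t in 𝓝[≥] x, y t ∈ U := htendsto hyc hyX hU
  have hzU : ∀ᶠ t in 𝓝[≥] x, z t ∈ U := htendsto hzc hzX (hxyz ▸ hU)
  obtain ⟨b, hxb, hsub⟩ := mem_nhdsGE_iff_exists_Ico_subset.1 (hyU.and hzU)
  obtain ⟨c, hxc, hcb⟩ := exists_between (mem_Ioi.1 hxb)
  have hnonneg {t : ℝ} (ht : t ∈ Ico x c) : 0 ≤ t := hx.1.trans ht.1
  have heq := ODE_solution_unique_of_mem_Icc_right (v := fun _ => f) (s := fun _ => U)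
    (fun _ _ => hLip) (hyc.mono fun t ht => hx.1.trans ht.1)
    (fun t ht => (hy t (hnonneg ht)).mono (Ici_subset_Ici.2 (hnonneg ht)))
    (fun t ht => (hsub ⟨ht.1, ht.2.trans hcb⟩).1) (hzc.mono fun t ht => hx.1.trans ht.1)
    (fun t ht => (hz t (hnonneg ht)).mono (Ici_subset_Ici.2 (hnonneg ht)))
    (fun t ht => (hsub ⟨ht.1, ht.2.trans hcb⟩).2) hxyz
  exact mem_of_superset (Ioo_mem_nhdsGT hxc) fun t ht => heq ⟨ht.1.le, ht.2.le⟩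

theorem map_add_of_hasDerivWithinAt {X : Set E} {f : E → E}
    (hf : ∀ x ∈ X, ∃ L : NNReal, ∃ U ∈ 𝓝[X] x, LipschitzOnWith L f U) {φ : ℝ → E → E}
    (hφ0 : ∀ ξ ∈ X, φ 0 ξ = ξ) (hφX : ∀ ξ ∈ X, ∀ t : ℝ, 0 ≤ t → φ t ξ ∈ X)
    (hφode : ∀ ξ ∈ X, ∀ t : ℝ, 0 ≤ t →
      HasDerivWithinAt (fun s => φ s ξ) (f (φ t ξ)) (Ici 0) t)
    {ξ : E} (hξ : ξ ∈ X) {t s : ℝ} (ht : 0 ≤ t) (hs : 0 ≤ s) :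
    φ (t + s) ξ = φ s (φ t ξ) := by
  have hφt : φ t ξ ∈ X := hφX ξ hξ t ht
  refine ODE_solution_unique_Ici hf (y := fun s => φ (t + s) ξ) (fun u hu => ?_)
    (fun u hu => hφX ξ hξ _ (add_nonneg ht hu)) (hφode _ hφt) (hφX _ hφt)
    (by simp [hφ0 _ hφt]) hs
  have h := (hφode ξ hξ (t + u) (add_nonneg ht hu)).scomp u
    ((hasDerivAt_id u).const_add t).hasDerivWithinAt fun w hw => add_nonneg ht hw
  rwa [one_smul] at h

structure IsClosedSalientCone (K : Set E) : Prop where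
  isClosed : IsClosed K
  convex : Convex ℝ K
  smul_mem : ∀ c : ℝ, 0 ≤ c → ∀ x ∈ K, c • x ∈ K
  eq_zero_of_neg_mem : ∀ x ∈ K, -x ∈ K → x = 0

namespace IsClosedSalientCone

variable {K : Set E} (hK : IsClosedSalientCone K)
include hK

theorem zero_mem_of_mem {x : E} (hx : x ∈ K) : (0 : E) ∈ K := by
  simpa using hK.smul_mem 0 le_rfl x hx

theorem add_mem {x y : E} (hx : x ∈ K) (hy : y ∈ K) : x + y ∈ K := by
  have hmid : (1 / 2 : ℝ) • x + (1 / 2 : ℝ) • y ∈ K :=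
    hK.convex hx hy (by norm_num) (by norm_num) (by norm_num)
  have h := hK.smul_mem 2 zero_le_two _ hmid
  rwa [smul_add, smul_smul, smul_smul, show (2 : ℝ) * (1 / 2) = 1 by norm_num, one_smul,
    one_smul] at h

theorem nonneg_of_smul_mem {v : E} (hvK : v ∈ K) (hv0 : v ≠ 0) {c : ℝ} (hc : c • v ∈ K) :
    0 ≤ c := by
  by_contra! hneg
  have h := hK.smul_mem (-c)⁻¹ (inv_nonneg.2 (neg_nonneg.2 hneg.le)) _ hc
  rw [smul_smul, inv_neg, neg_mul, inv_mul_cancel₀ hneg.ne, neg_one_smul] at h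
  exact hv0 (hK.eq_zero_of_neg_mem v hvK h)

theorem exists_mul_norm_smul_sub_mem {v : E} (hv : v ∈ interior K) :
    ∃ r : ℝ, 0 ≤ r ∧ ∀ z : E, (r * ‖z‖) • v - z ∈ K := by
  obtain ⟨ρ, hρ, hball⟩ :=
    Metric.nhds_basis_closedBall.mem_iff.1 (mem_interior_iff_mem_nhds.1 hv)
  refine ⟨ρ⁻¹, by positivity, fun z => ?_⟩
  rcases eq_or_ne z 0 with rfl | hz
  · simpa using hK.zero_mem_of_mem (interior_subset hv)
  have hz' : 0 < ‖z‖ := norm_pos_iff.2 hz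
  have hmem : v - (ρ / ‖z‖) • z ∈ K := hball <| by
    rw [Metric.mem_closedBall, dist_eq_norm, sub_sub_cancel_left, norm_neg, norm_smul,
      Real.norm_eq_abs, abs_div, abs_of_pos hρ, abs_norm, div_mul_cancel₀ _ hz'.ne']
  have h := hK.smul_mem (‖z‖ / ρ) (by positivity) _ hmem
  rwa [smul_sub, smul_smul, div_mul_div_cancel₀ hρ.ne', div_self hz'.ne', one_smul,
    div_eq_inv_mul] at h

theorem exists_norm_le_of_mem_of_smul_sub_mem [ProperSpace E] (v : E) :
    ∃ C : ℝ, ∀ c : ℝ, 0 ≤ c → ∀ z ∈ K, c • v - z ∈ K → ‖z‖ ≤ C * c := by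
  -- By compactness `-u` stays uniformly away from `K` for unit `u ∈ K`, while for `z ∈ [0, c • v]`
  -- the point `c / ‖z‖ • v - z / ‖z‖ ∈ K` is within `c * ‖v‖ / ‖z‖` of `-z / ‖z‖`.
  set S := K ∩ Metric.sphere (0 : E) 1
  obtain ⟨m, hm, hmS⟩ : ∃ m, 0 < m ∧ ∀ u ∈ S, m ≤ Metric.infDist (-u) K := by
    refine ((isCompact_sphere 0 1).inter_left hK.isClosed).exists_forall_le'
      ((Metric.continuous_infDist_pt K).comp continuous_neg).continuousOn fun u hu => ?_
    have hu0 : u ≠ 0 := ne_zero_of_mem_unit_sphere ⟨u, hu.2⟩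
    exact (hK.isClosed.notMem_iff_infDist_pos ⟨u, hu.1⟩).1
      fun hneg => hu0 (hK.eq_zero_of_neg_mem u hu.1 hneg)
  refine ⟨‖v‖ / m, fun c hc z hz hcz => ?_⟩
  rcases eq_or_ne z 0 with rfl | hz0
  · simp only [norm_zero]; positivity
  have hz' : 0 < ‖z‖ := norm_pos_iff.2 hz0
  set u := ‖z‖⁻¹ • z
  have huS : u ∈ S := ⟨hK.smul_mem _ (by positivity) z hz, by
    simp [u, norm_smul, inv_mul_cancel₀ hz'.ne']⟩
  have hmem : (c / ‖z‖) • v - u ∈ K := by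
    simpa [u, smul_sub, smul_smul, div_eq_inv_mul] using
      hK.smul_mem ‖z‖⁻¹ (by positivity) _ hcz
  have hm_le : m ≤ c * ‖v‖ / ‖z‖ := calc
    m ≤ Metric.infDist (-u) K := hmS u huS
    _ ≤ dist (-u) ((c / ‖z‖) • v - u) := Metric.infDist_le_dist_of_mem hmem
    _ = c * ‖v‖ / ‖z‖ := by
      rw [dist_eq_norm, show -u - ((c / ‖z‖) • v - u) = -((c / ‖z‖) • v) by abel, norm_neg,
        norm_smul, Real.norm_eq_abs, abs_div, abs_of_nonneg hc, abs_norm]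
      ring
  rw [le_div_iff₀ hz'] at hm_le
  rw [div_mul_eq_mul_div, le_div_iff₀ hm]
  linarith

end IsClosedSalientCone

/-- `M(x/v)` of Hilbert's projective metric; `-upperCoeff K v (-x)` is `m(x/v)`, so `orderOsc`
is the oscillation `M(x/v) - m(x/v)`. -/
noncomputable def upperCoeff (K : Set E) (v x : E) : ℝ :=
  sInf {c : ℝ | c • v - x ∈ K}

noncomputable def orderOsc (K : Set E) (v x : E) : ℝ :=
  upperCoeff K v x + upperCoeff K v (-x)

section upperCoeff

variable {K : Set E} {v : E} (hK : IsClosedSalientCone K) (hv : v ∈ interior K) (hv0 : v ≠ 0)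
include hK hv hv0

theorem bddBelow_setOf_smul_sub_mem (x : E) : BddBelow {c : ℝ | c • v - x ∈ K} := by
  obtain ⟨r, -, hr⟩ := hK.exists_mul_norm_smul_sub_mem hv
  refine ⟨-(r * ‖x‖), fun c hc => ?_⟩
  have hsum := hK.add_mem hc (hr (-x))
  rw [norm_neg, sub_neg_eq_add, sub_add_add_cancel, ← add_smul] at hsum
  linarith [hK.nonneg_of_smul_mem (interior_subset hv) hv0 hsum]

theorem upperCoeff_le {x : E} {c : ℝ} (h : c • v - x ∈ K) : upperCoeff K v x ≤ c :=
  csInf_le (bddBelow_setOf_smul_sub_mem hK hv hv0 x) h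

theorem smul_upperCoeff_sub_mem (x : E) : upperCoeff K v x • v - x ∈ K := by
  obtain ⟨r, -, hr⟩ := hK.exists_mul_norm_smul_sub_mem hv
  have hclosed : IsClosed {c : ℝ | c • v - x ∈ K} :=
    hK.isClosed.preimage (by fun_prop)
  exact hclosed.csInf_mem ⟨_, hr x⟩ (bddBelow_setOf_smul_sub_mem hK hv hv0 x)

theorem upperCoeff_lt_of_mem_interior {x : E} {c : ℝ} (h : c • v - x ∈ interior K) :
    upperCoeff K v x < c := by
  have hcont : Continuous fun ε : ℝ => (c - ε) • v - x := by fun_prop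
  have hev : ∀ᶠ ε in 𝓝[>] (0 : ℝ), (c - ε) • v - x ∈ interior K :=
    nhdsWithin_le_nhds <| hcont.continuousAt.eventually_mem <| by
      simpa using isOpen_interior.mem_nhds h
  obtain ⟨ε, hε, hεpos⟩ := (hev.and self_mem_nhdsWithin).exists
  linarith [upperCoeff_le hK hv hv0 (interior_subset hε), show (0 : ℝ) < ε from hεpos]

theorem continuous_upperCoeff : Continuous (upperCoeff K v) := by
  obtain ⟨r, -, hr⟩ := hK.exists_mul_norm_smul_sub_mem hv
  refine (LipschitzWith.of_le_add_mul' r fun x y => upperCoeff_le hK hv hv0 ?_).continuous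
  have hsum := hK.add_mem (smul_upperCoeff_sub_mem hK hv hv0 y) (hr (x - y))
  rwa [← dist_eq_norm, sub_add_sub_comm, ← add_smul, add_sub_cancel] at hsum

theorem upperCoeff_smul_self (c : ℝ) : upperCoeff K v (c • v) = c := by
  refine le_antisymm (upperCoeff_le hK hv hv0 ?_) ?_
  · simpa using hK.zero_mem_of_mem (interior_subset hv)
  · have h := smul_upperCoeff_sub_mem hK hv hv0 (c • v)
    rw [← sub_smul] at h
    linarith [hK.nonneg_of_smul_mem (interior_subset hv) hv0 h]

theorem orderOsc_nonneg (x : E) : 0 ≤ orderOsc K v x := by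
  have hsum := hK.add_mem (smul_upperCoeff_sub_mem hK hv hv0 x)
    (smul_upperCoeff_sub_mem hK hv hv0 (-x))
  rw [sub_add_sub_comm, ← add_smul, add_neg_cancel, sub_zero] at hsum
  exact hK.nonneg_of_smul_mem (interior_subset hv) hv0 hsum

theorem exists_infDist_span_le [ProperSpace E] :
    ∃ C : ℝ, ∀ x : E,
      Metric.infDist x (Submodule.span ℝ {v} : Set E) ≤ C * orderOsc K v x := by
  obtain ⟨C, hC⟩ := hK.exists_norm_le_of_mem_of_smul_sub_mem v
  refine ⟨C, fun x => ?_⟩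
  have hlow : upperCoeff K v (-x) • v - -x ∈ K := smul_upperCoeff_sub_mem hK hv hv0 (-x)
  have hup : orderOsc K v x • v - (upperCoeff K v (-x) • v - -x) ∈ K := by
    convert smul_upperCoeff_sub_mem hK hv hv0 x using 1
    rw [orderOsc, add_smul]; abel
  calc Metric.infDist x (Submodule.span ℝ {v} : Set E)
      ≤ dist x ((-upperCoeff K v (-x)) • v) := Metric.infDist_le_dist_of_mem
        (Submodule.smul_mem _ _ (Submodule.mem_span_singleton_self v))
    _ = ‖upperCoeff K v (-x) • v - -x‖ := by rw [dist_eq_norm, neg_smul]; congr 1; abel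
    _ ≤ C * orderOsc K v x := hC _ (orderOsc_nonneg hK hv hv0 x) _ hlow hup

end upperCoeff

theorem AntitoneOn.exists_tendsto_atTop {a : ℝ → ℝ} {b : ℝ} (ha : AntitoneOn a (Ici b))
    (hbdd : BddBelow (a '' Ici b)) : ∃ l, Tendsto a atTop (𝓝 l) :=
  ⟨_, tendsto_comp_val_Ici_atTop.1 <| tendsto_atTop_ciInf (fun s t hst => ha s.2 t.2 hst)
    (by rwa [← image_eq_range])⟩

structure IsStronglyMonotoneSemiflow (K X : Set E) (v : E) (φ : ℝ → E → E) : Prop where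
  map_zero : ∀ ξ ∈ X, φ 0 ξ = ξ
  mapsTo : ∀ ξ ∈ X, ∀ t : ℝ, 0 ≤ t → φ t ξ ∈ X
  map_add : ∀ ξ ∈ X, ∀ t s : ℝ, 0 ≤ t → 0 ≤ s → φ (t + s) ξ = φ s (φ t ξ)
  sub_mem_interior : ∀ ξ₁ ∈ X, ∀ ξ₂ ∈ X, ∀ t : ℝ, 0 < t →
    ξ₁ - ξ₂ ∈ K → ξ₁ ≠ ξ₂ → φ t ξ₁ - φ t ξ₂ ∈ interior K
  add_smul_mem : ∀ ξ ∈ X, ∀ c : ℝ, ξ + c • v ∈ X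
  map_add_smul : ∀ ξ ∈ X, ∀ c t : ℝ, 0 ≤ t → φ t (ξ + c • v) = φ t ξ + c • v

namespace IsStronglyMonotoneSemiflow

variable {K X : Set E} {v : E} {φ : ℝ → E → E} (hφ : IsStronglyMonotoneSemiflow K X v φ)
  (hK : IsClosedSalientCone K)
include hφ hK

theorem sub_mem {ξ₁ ξ₂ : E} (h₁ : ξ₁ ∈ X) (h₂ : ξ₂ ∈ X) (h : ξ₁ - ξ₂ ∈ K) {t : ℝ}
    (ht : 0 ≤ t) : φ t ξ₁ - φ t ξ₂ ∈ K := by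
  rcases eq_or_ne ξ₁ ξ₂ with rfl | hne
  · rw [sub_self]; exact hK.zero_mem_of_mem h
  rcases ht.eq_or_lt with rfl | ht
  · rwa [hφ.map_zero _ h₁, hφ.map_zero _ h₂]
  · exact interior_subset (hφ.sub_mem_interior _ h₁ _ h₂ t ht h hne)

theorem exists_norm_map_sub_le [ProperSpace E] (hv : v ∈ interior K) :
    ∃ C : ℝ, ∀ η ∈ X, ∀ w ∈ X, ∀ t : ℝ, 0 ≤ t → ‖φ t η - φ t w‖ ≤ C * ‖η - w‖ := by
  obtain ⟨r, hr0, hr⟩ := hK.exists_mul_norm_smul_sub_mem hv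
  obtain ⟨C, hC⟩ := hK.exists_norm_le_of_mem_of_smul_sub_mem v
  refine ⟨(2 * C + ‖v‖) * r, fun η hη w hw t ht => ?_⟩
  set c := r * ‖η - w‖
  have hup := hφ.sub_mem hK (hφ.add_smul_mem w hw c) hη
    (by convert hr (η - w) using 1; abel) ht
  have hlow := hφ.sub_mem hK hη (hφ.add_smul_mem w hw (-c))
    (by convert hr (w - η) using 1; rw [norm_sub_rev, neg_smul]; abel) ht
  rw [hφ.map_add_smul w hw _ t ht] at hup hlow
  have hc : 0 ≤ c := by positivity
  have hbd := hC (2 * c) (by positivity) (φ t η - φ t w + c • v)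
    (by convert hlow using 1; simp; abel) (by convert hup using 1; rw [two_mul, add_smul]; abel)
  calc ‖φ t η - φ t w‖ = ‖(φ t η - φ t w + c • v) - c • v‖ := by rw [add_sub_cancel_right]
    _ ≤ ‖φ t η - φ t w + c • v‖ + ‖c • v‖ := norm_sub_le _ _
    _ ≤ C * (2 * c) + c * ‖v‖ := by
      rw [norm_smul, Real.norm_of_nonneg hc]; gcongr
    _ = (2 * C + ‖v‖) * r * ‖η - w‖ := by ring

theorem tendsto_map_add_sub_smul [ProperSpace E] (hv : v ∈ interior K) {ξ w : E} (hξ : ξ ∈ X)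
    (hw : w ∈ X) {s c : ℕ → ℝ} (hs : Tendsto s atTop atTop)
    (hlim : Tendsto (fun k => φ (s k) ξ - c k • v) atTop (𝓝 w)) {r : ℝ} (hr : 0 ≤ r) :
    Tendsto (fun k => φ (s k + r) ξ - c k • v) atTop (𝓝 (φ r w)) := by
  obtain ⟨C, hC⟩ := hφ.exists_norm_map_sub_le hK hv
  have hshift : ∀ᶠ k in atTop, φ (s k) ξ - c k • v ∈ X ∧
      φ r (φ (s k) ξ - c k • v) = φ (s k + r) ξ - c k • v := by
    filter_upwards [hs.eventually_ge_atTop 0] with k hk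
    have hmem := hφ.mapsTo ξ hξ _ hk
    rw [sub_eq_add_neg, ← neg_smul, hφ.map_add_smul _ hmem _ _ hr, hφ.map_add ξ hξ _ _ hk hr]
    exact ⟨hφ.add_smul_mem _ hmem _, by rw [neg_smul, sub_eq_add_neg]⟩
  have hnorm := (tendsto_iff_norm_sub_tendsto_zero.1 hlim).const_mul C
  rw [mul_zero] at hnorm
  refine tendsto_iff_norm_sub_tendsto_zero.2 (squeeze_zero' (.of_forall fun _ => norm_nonneg _)
    ?_ hnorm)
  filter_upwards [hshift] with k ⟨hmem, heq⟩
  rw [← heq]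
  exact hC _ hmem _ hw r hr

variable (hv : v ∈ interior K) (hv0 : v ≠ 0)
include hv hv0

theorem upperCoeff_map_sub_le {ξ₁ ξ₂ : E} (h₁ : ξ₁ ∈ X) (h₂ : ξ₂ ∈ X) {t : ℝ} (ht : 0 ≤ t) :
    upperCoeff K v (φ t ξ₁ - φ t ξ₂) ≤ upperCoeff K v (ξ₁ - ξ₂) := by
  set c := upperCoeff K v (ξ₁ - ξ₂)
  have h := hφ.sub_mem hK (hφ.add_smul_mem ξ₂ h₂ c) h₁
    (by convert smul_upperCoeff_sub_mem hK hv hv0 (ξ₁ - ξ₂) using 1; abel) ht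
  rw [hφ.map_add_smul ξ₂ h₂ c t ht] at h
  exact upperCoeff_le hK hv hv0 (by convert h using 1; abel)

theorem upperCoeff_map_sub_lt {ξ₁ ξ₂ : E} (h₁ : ξ₁ ∈ X) (h₂ : ξ₂ ∈ X)
    (hne : ξ₁ - ξ₂ ≠ upperCoeff K v (ξ₁ - ξ₂) • v) {t : ℝ} (ht : 0 < t) :
    upperCoeff K v (φ t ξ₁ - φ t ξ₂) < upperCoeff K v (ξ₁ - ξ₂) := by
  set c := upperCoeff K v (ξ₁ - ξ₂)
  have h := hφ.sub_mem_interior _ (hφ.add_smul_mem ξ₂ h₂ c) _ h₁ t ht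
    (by convert smul_upperCoeff_sub_mem hK hv hv0 (ξ₁ - ξ₂) using 1; abel)
    fun heq => hne (by rw [← heq]; abel)
  rw [hφ.map_add_smul ξ₂ h₂ c t ht.le] at h
  exact upperCoeff_lt_of_mem_interior hK hv hv0 (by convert h using 1; abel)

theorem antitoneOn_upperCoeff_map_sub {ξ₁ ξ₂ : E} (h₁ : ξ₁ ∈ X) (h₂ : ξ₂ ∈ X) :
    AntitoneOn (fun t => upperCoeff K v (φ t ξ₁ - φ t ξ₂)) (Ici 0) := by
  intro s hs t _ hst
  have h := hφ.upperCoeff_map_sub_le hK hv hv0 (hφ.mapsTo ξ₁ h₁ s hs) (hφ.mapsTo ξ₂ h₂ s hs)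
    (sub_nonneg.2 hst)
  rwa [← hφ.map_add ξ₁ h₁ s _ hs (sub_nonneg.2 hst),
    ← hφ.map_add ξ₂ h₂ s _ hs (sub_nonneg.2 hst), add_sub_cancel] at h

theorem exists_tendsto_upperCoeff_map_sub {ξ₁ ξ₂ : E} (h₁ : ξ₁ ∈ X) (h₂ : ξ₂ ∈ X) :
    ∃ A, Tendsto (fun t => upperCoeff K v (φ t ξ₁ - φ t ξ₂)) atTop (𝓝 A) := by
  refine (hφ.antitoneOn_upperCoeff_map_sub hK hv hv0 h₁ h₂).exists_tendsto_atTop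
    ⟨-upperCoeff K v (ξ₂ - ξ₁), ?_⟩
  rintro _ ⟨t, ht, rfl⟩
  have hosc := orderOsc_nonneg hK hv hv0 (φ t ξ₁ - φ t ξ₂)
  have hle := hφ.upperCoeff_map_sub_le hK hv hv0 h₂ h₁ ht
  rw [orderOsc, neg_sub] at hosc
  dsimp only
  linarith

theorem tendsto_orderOsc_map_sub [ProperSpace E] {ξ₁ ξ₂ w₁ w₂ : E} (h₁ : ξ₁ ∈ X)
    (h₂ : ξ₂ ∈ X) (hw₁ : w₁ ∈ X) (hw₂ : w₂ ∈ X) {s c : ℕ → ℝ} (hs : Tendsto s atTop atTop)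
    (hlim₁ : Tendsto (fun k => φ (s k) ξ₁ - c k • v) atTop (𝓝 w₁))
    (hlim₂ : Tendsto (fun k => φ (s k) ξ₂ - c k • v) atTop (𝓝 w₂)) :
    Tendsto (fun t => orderOsc K v (φ t ξ₁ - φ t ξ₂)) atTop (𝓝 0) := by
  obtain ⟨A, hA⟩ := hφ.exists_tendsto_upperCoeff_map_sub hK hv hv0 h₁ h₂
  obtain ⟨B, hB⟩ := hφ.exists_tendsto_upperCoeff_map_sub hK hv hv0 h₂ h₁
  have hconst : ∀ r, 0 ≤ r → upperCoeff K v (φ r w₁ - φ r w₂) = A ∧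
      upperCoeff K v (φ r w₂ - φ r w₁) = B := by
    intro r hr
    have hsr : Tendsto (fun k => s k + r) atTop atTop := tendsto_atTop_add_const_right _ r hs
    have hdiff : Tendsto (fun k => φ (s k + r) ξ₁ - φ (s k + r) ξ₂) atTop
        (𝓝 (φ r w₁ - φ r w₂)) := by
      simpa using (hφ.tendsto_map_add_sub_smul hK hv h₁ hw₁ hs hlim₁ hr).sub
        (hφ.tendsto_map_add_sub_smul hK hv h₂ hw₂ hs hlim₂ hr)
    have hcont := (continuous_upperCoeff hK hv hv0).tendsto
    exact ⟨tendsto_nhds_unique ((hcont _).comp hdiff) (hA.comp hsr),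
      tendsto_nhds_unique ((hcont _).comp (by simpa using hdiff.neg)) (hB.comp hsr)⟩
  have hsum : A + B = 0 := by
    obtain ⟨hA0, hB0⟩ := hconst 0 le_rfl
    rw [hφ.map_zero _ hw₁, hφ.map_zero _ hw₂] at hA0 hB0
    by_cases heq : w₁ - w₂ = A • v
    · rw [← neg_sub, heq, ← neg_smul, upperCoeff_smul_self hK hv hv0] at hB0
      linarith
    · have hlt := hφ.upperCoeff_map_sub_lt hK hv hv0 hw₁ hw₂ (by rwa [hA0]) one_pos
      rw [(hconst 1 zero_le_one).1, hA0] at hlt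
      exact absurd hlt (lt_irrefl A)
  simpa [orderOsc, hsum, neg_sub] using hA.add hB

end IsStronglyMonotoneSemiflow

theorem stmt13_general {n : ℕ} (K X : Set (EuclideanSpace ℝ (Fin n)))
    (f : EuclideanSpace ℝ (Fin n) → EuclideanSpace ℝ (Fin n))
    (φ : ℝ → EuclideanSpace ℝ (Fin n) → EuclideanSpace ℝ (Fin n))
    (v : EuclideanSpace ℝ (Fin n))
    -- K is a closed pointed convex cone with nonempty interior
    (hKclosed : IsClosed K) (hKconv : Convex ℝ K)
    (hKcone : ∀ c : ℝ, 0 ≤ c → ∀ x ∈ K, c • x ∈ K)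
    (hKpointed : ∀ x ∈ K, -x ∈ K → x = 0)
    (hv : v ∈ interior K) (hvnorm : ‖v‖ = 1)
    -- X is closed, the closure of its interior, and invariant under translations by v
    (hXclosed : IsClosed X)
    (hXtrans : ∀ x ∈ X, ∀ lam : ℝ, x + lam • v ∈ X)
    -- f is locally Lipschitz on X
    (hf : ∀ x ∈ X, ∃ L : NNReal, ∃ U ∈ nhdsWithin x X, LipschitzOnWith L f U)
    -- φ is the forward complete flow of ẋ = f(x) on X
    (hφ0 : ∀ ξ ∈ X, φ 0 ξ = ξ)
    (hφX : ∀ ξ ∈ X, ∀ t : ℝ, 0 ≤ t → φ t ξ ∈ X)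
    (hφode : ∀ ξ ∈ X, ∀ t : ℝ, 0 ≤ t →
      HasDerivWithinAt (fun s => φ s ξ) (f (φ t ξ)) (Set.Ici 0) t)
    -- strong monotonicity: ξ₁ ≻ ξ₂ ⟹ φ_t(ξ₁) ≫ φ_t(ξ₂) for t > 0
    (hmono : ∀ ξ₁ ∈ X, ∀ ξ₂ ∈ X, ∀ t : ℝ, 0 < t →
      ξ₁ - ξ₂ ∈ K → ξ₁ ≠ ξ₂ → φ t ξ₁ - φ t ξ₂ ∈ interior K)
    -- translation invariance along v
    (htrans : ∀ ξ ∈ X, ∀ lam t : ℝ, 0 ≤ t → φ t (ξ + lam • v) = φ t ξ + lam • v)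
    -- the solution through ξ is bounded modulo v
    (ξ : EuclideanSpace ℝ (Fin n)) (hξ : ξ ∈ X)
    (hbd : ∃ M : ℝ, ∀ t : ℝ, 0 ≤ t → ‖piProj v (φ t ξ)‖ ≤ M) :
    ∀ τ : ℝ, 0 < τ →
      Tendsto (fun t : ℝ => Metric.infDist (φ (t + τ) ξ - φ t ξ)
          (Submodule.span ℝ {v} : Set (EuclideanSpace ℝ (Fin n))))
        atTop (𝓝 0) := by
  intro τ hτ
  have hK : IsClosedSalientCone K := ⟨hKclosed, hKconv, hKcone, hKpointed⟩
  have hv0 : v ≠ 0 := by rintro rfl; simp at hvnorm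
  have hφ : IsStronglyMonotoneSemiflow K X v φ := ⟨hφ0, hφX,
    fun ξ hξ _ _ ht hs => map_add_of_hasDerivWithinAt hf hφ0 hφX hφode hξ ht hs,
    hmono, hXtrans, htrans⟩
  obtain ⟨M, hM⟩ := hbd
  obtain ⟨w, -, σ, hσ, hlim⟩ := (isCompact_closedBall 0 M).tendsto_subseq
    (x := fun k : ℕ => piProj v (φ k ξ)) fun k => by simpa using hM k k.cast_nonneg
  have hs : Tendsto (fun k => ((σ k : ℕ) : ℝ)) atTop atTop :=
    tendsto_natCast_atTop_atTop.comp hσ.tendsto_atTop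
  have hlim₂ : Tendsto (fun k => φ (σ k) ξ - inner ℝ v (φ (σ k) ξ) • v) atTop (𝓝 w) := hlim
  have hw : w ∈ X := hXclosed.mem_of_tendsto hlim₂ <| .of_forall fun k => by
    simpa [sub_eq_add_neg] using hXtrans _ (hφX ξ hξ _ (σ k).cast_nonneg) (-inner ℝ v (φ (σ k) ξ))
  have hlim₁ := (hφ.tendsto_map_add_sub_smul hK hv hξ hw hs hlim₂ hτ.le).congr fun k => by
    rw [add_comm, hφ.map_add ξ hξ _ _ hτ.le (σ k).cast_nonneg]
  have hosc := hφ.tendsto_orderOsc_map_sub hK hv hv0 (hφX ξ hξ τ hτ.le) hξ (hφX w hw τ hτ.le) hw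
    hs hlim₁ hlim₂
  obtain ⟨C, hC⟩ := exists_infDist_span_le hK hv hv0
  refine squeeze_zero' (.of_forall fun _ => Metric.infDist_nonneg) ?_
    (by simpa using hosc.const_mul C)
  filter_upwards [eventually_ge_atTop 0] with t ht
  rw [add_comm, hφ.map_add ξ hξ _ _ hτ.le ht]
  exact hC _

/-- for a strongly monotone, forward complete system `ẋ = f(x)` on `X`,
translation invariant along the unit vector `v ∈ interior K`, with `X` closed and
invariant under translations by `v`, and a solution `φ_t(ξ)` bounded modulo `v`, for
every `τ > 0` the distance from `φ_{t+τ}(ξ) - φ_t(ξ)` to `span{v}` tends to `0` as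
`t → ∞`. -/
theorem stmt13 {n : ℕ} (K X : Set (EuclideanSpace ℝ (Fin n)))
    (f : EuclideanSpace ℝ (Fin n) → EuclideanSpace ℝ (Fin n))
    (φ : ℝ → EuclideanSpace ℝ (Fin n) → EuclideanSpace ℝ (Fin n))
    (v : EuclideanSpace ℝ (Fin n))
    -- K is a closed pointed convex cone with nonempty interior
    (hKclosed : IsClosed K) (hKconv : Convex ℝ K)
    (hKcone : ∀ c : ℝ, 0 ≤ c → ∀ x ∈ K, c • x ∈ K)
    (hKpointed : ∀ x ∈ K, -x ∈ K → x = 0)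
    (hv : v ∈ interior K) (hvnorm : ‖v‖ = 1)
    -- X is closed, the closure of its interior, and invariant under translations by v
    (hXclosed : IsClosed X) (hXreg : X = closure (interior X))
    (hXtrans : ∀ x ∈ X, ∀ lam : ℝ, x + lam • v ∈ X)
    -- f is locally Lipschitz on X
    (hf : ∀ x ∈ X, ∃ L : NNReal, ∃ U ∈ nhdsWithin x X, LipschitzOnWith L f U)
    -- φ is the forward complete flow of ẋ = f(x) on X
    (hφ0 : ∀ ξ ∈ X, φ 0 ξ = ξ)
    (hφX : ∀ ξ ∈ X, ∀ t : ℝ, 0 ≤ t → φ t ξ ∈ X)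
    (hφode : ∀ ξ ∈ X, ∀ t : ℝ, 0 ≤ t →
      HasDerivWithinAt (fun s => φ s ξ) (f (φ t ξ)) (Set.Ici 0) t)
    -- strong monotonicity: ξ₁ ≻ ξ₂ ⟹ φ_t(ξ₁) ≫ φ_t(ξ₂) for t > 0
    (hmono : ∀ ξ₁ ∈ X, ∀ ξ₂ ∈ X, ∀ t : ℝ, 0 < t →
      ξ₁ - ξ₂ ∈ K → ξ₁ ≠ ξ₂ → φ t ξ₁ - φ t ξ₂ ∈ interior K)
    -- translation invariance along v
    (htrans : ∀ ξ ∈ X, ∀ lam t : ℝ, 0 ≤ t → φ t (ξ + lam • v) = φ t ξ + lam • v)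
    -- the solution through ξ is bounded modulo v
    (ξ : EuclideanSpace ℝ (Fin n)) (hξ : ξ ∈ X)
    (hbd : ∃ M : ℝ, ∀ t : ℝ, 0 ≤ t → ‖piProj v (φ t ξ)‖ ≤ M) :
    ∀ τ : ℝ, 0 < τ →
      Tendsto (fun t : ℝ => Metric.infDist (φ (t + τ) ξ - φ t ξ)
          (Submodule.span ℝ {v} : Set (EuclideanSpace ℝ (Fin n))))
        atTop (𝓝 0) :=
  stmt13_general K X f φ v hKclosed hKconv hKcone hKpointed hv hvnorm hXclosed hXtrans hf hφ0 hφX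
    hφode hmono htrans ξ hξ hbd
end
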